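/- Let ε ∈ {−1,+1} and 0 < t < 1/√2. Then (0,0) is a strict local minimum of F_{t,ε}: there is a neighborhood of the origin on which F_{t,ε}(p) > F_{t,ε}(0,0) = 0 for every p ≠ (0,0). -/
import Mathlib


/-- The Karigiannis–Leung Chern–Simons type functional, evaluated on the
connections A = i(a₁η₁ + a₂η₂ + a₃η₃) on the trivial complex line bundle over a
compact 3-Sasakian 7-manifold with the coclosed G₂-structure φ_{t,ε}
(normalized so that Vol(X, g^{ts}) = 1), with x = a₃ and y² = a₁² + a₂²:
F_{t,ε}(x,y) = −[(x² + y²)(2(x² + y²) − 1) + 2t²(x² + εy²)]. -/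
def F (t ε : ℝ) : ℝ × ℝ → ℝ := fun p =>
  -((p.1 ^ 2 + p.2 ^ 2) * (2 * (p.1 ^ 2 + p.2 ^ 2) - 1) + 2 * t ^ 2 * (p.1 ^ 2 + ε * p.2 ^ 2))

/-- For 0 < t < 1/√2, the origin (the trivial flat connection) is a strict local
minimum of F_{t,ε}, with F_{t,ε}(0,0) = 0. -/
theorem stmt_12 (t ε : ℝ) (ht : 0 < t) (ht' : t < 1 / Real.sqrt 2) (hε : ε = 1 ∨ ε = -1) :
    F t ε (0, 0) = 0 ∧
    ∃ U ∈ nhds ((0, 0) : ℝ × ℝ), ∀ p ∈ U, p ≠ ((0, 0) : ℝ × ℝ) → F t ε (0, 0) < F t ε p := by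
  have hs : (0:ℝ) < Real.sqrt 2 := Real.sqrt_pos.mpr (by norm_num)
  have h1 : t * Real.sqrt 2 < 1 := (lt_div_iff₀ hs).mp ht'
  have h2 : 2 * t ^ 2 < 1 := by
    nlinarith [Real.sq_sqrt (by norm_num : (0:ℝ) ≤ 2), mul_pos ht hs]
  constructor
  · simp [F]
  · refine ⟨{p : ℝ × ℝ | p.1 ^ 2 + p.2 ^ 2 < (1 - 2 * t ^ 2) / 2}, ?_, ?_⟩
    · have hopen : IsOpen {p : ℝ × ℝ | p.1 ^ 2 + p.2 ^ 2 < (1 - 2 * t ^ 2) / 2} := by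
        apply isOpen_lt (by fun_prop) continuous_const
      exact hopen.mem_nhds (by simp only [Set.mem_setOf_eq]; norm_num; linarith)
    · rintro ⟨x, y⟩ hp hne
      simp only [Set.mem_setOf_eq] at hp
      have hxy : x ≠ 0 ∨ y ≠ 0 := by
        by_contra h
        push_neg at h
        exact hne (by simp [h.1, h.2])
      have hr : 0 < x ^ 2 + y ^ 2 := by
        rcases hxy with h | h
        · have := sq_nonneg y; positivity
        · have := sq_nonneg x; positivity
      simp only [F]
      rcases hε with h | h <;> subst h <;>
        nlinarith [sq_nonneg x, sq_nonneg y, mul_pos hr hr, mul_lt_mul_of_pos_left hp hr]
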